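/- arXiv:2010.05081 — 2 statements merged into one kernel-verified Lean document; each statement's English description precedes it below -/
import Mathlib

section
/- Let m₀ < 0, q : [0,T₁] → (0,1] continuous with q(0)=1, and let r : [0,T₁] → ℝ be C¹ with r(0) ≤ λ^{-1} (where 0 < λ < 1) and satisfying c₂ m₀ ≤ r'(t) ≤ c₁ m₀ for constants 0 < c₁ < c₂, together with q(t) ≤ r(t) ≤ λ^{-1} q(t) for all t. Then for s > 0, s ≠ 1: ∫₀^t q(τ)^{-s} dτ ≤ (1-s)^{-1} m₀^{-1} c₁^{-1} λ^{-s} [q(t)^{1-s} - λ^{s-1}]. -/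
/-
Since `λ r ≤ q` and `r' ≤ c₁ m₀ < 0`, the integrand obeys
`q^{-s} ≤ λ^{-s} r^{-s} ≤ (m₀ c₁)⁻¹ λ^{-s} r^{-s} r'`, and the right-hand side is the derivative of
`(m₀ c₁)⁻¹ λ^{-s} (1-s)⁻¹ r^{1-s}`. Integrating bounds `∫₀ᵗ q^{-s}` by the increment of that
function between `0` and `t`. As `x ↦ (1-s)⁻¹ x^{1-s}` is increasing and the prefactor is negative,
the increment only grows when `r t` is replaced by `q t ≤ r t` and `r 0` by `λ⁻¹ ≥ r 0`.
-/

open MeasureTheory Set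

lemma monotoneOn_inv_one_sub_mul_rpow_one_sub {s : ℝ} (hs : s ≠ 1) :
    MonotoneOn (fun x : ℝ => (1 - s)⁻¹ * x ^ (1 - s)) (Ioi 0) := by
  intro x hx y _ hxy
  rcases hs.lt_or_gt with hs | hs
  · exact mul_le_mul_of_nonneg_left (Real.rpow_le_rpow hx.le hxy (by linarith))
      (inv_nonneg.2 (by linarith))
  · exact mul_le_mul_of_nonpos_left (Real.rpow_le_rpow_of_nonpos hx hxy (by linarith))
      (inv_nonpos.2 (by linarith))

lemma HasDerivAt.inv_one_sub_mul_rpow_one_sub {r : ℝ → ℝ} {r' x s : ℝ} (hr : HasDerivAt r r' x)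
    (hpos : 0 < r x) (hs : s ≠ 1) :
    HasDerivAt (fun y => (1 - s)⁻¹ * r y ^ (1 - s)) (r x ^ (-s) * r') x := by
  have : 1 - s ≠ 0 := sub_ne_zero.2 hs.symm
  refine ((hr.rpow_const (p := 1 - s) (Or.inl hpos.ne')).const_mul (1 - s)⁻¹).congr_deriv ?_
  rw [sub_sub_cancel_left]
  field_simp

lemma rpow_neg_le_of_le_inv_mul_of_le_mul {lam m c q r r' s : ℝ} (hlam : 0 < lam) (hr : 0 < r)
    (hq : r ≤ lam⁻¹ * q) (hs : 0 ≤ s) (hm : m < 0) (hc : 0 < c) (hr' : r' ≤ c * m) :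
    q ^ (-s) ≤ m⁻¹ * c⁻¹ * lam ^ (-s) * (r ^ (-s) * r') := by
  have hcm : c * m < 0 := mul_neg_of_pos_of_neg hc hm
  have hq' : q ^ (-s) ≤ lam ^ (-s) * r ^ (-s) := by
    rw [← Real.mul_rpow hlam.le hr.le]
    exact Real.rpow_le_rpow_of_nonpos (mul_pos hlam hr) ((le_inv_mul_iff₀ hlam).1 hq)
      (neg_nonpos.2 hs)
  have hone : 1 ≤ r' / (c * m) := by rwa [le_div_iff_of_neg hcm, one_mul]
  calc q ^ (-s) ≤ lam ^ (-s) * r ^ (-s) * 1 := by rwa [mul_one]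
    _ ≤ lam ^ (-s) * r ^ (-s) * (r' / (c * m)) := by gcongr
    _ = m⁻¹ * c⁻¹ * lam ^ (-s) * (r ^ (-s) * r') := by field_simp

theorem stmt_8_general (T₁ m₀ lam c₁ : ℝ) (hm₀ : m₀ < 0)
    (hlam1 : 0 < lam) (hc₁ : 0 < c₁)
    (q r r' : ℝ → ℝ)
    (hqcont : ContinuousOn q (Set.Icc 0 T₁))
    (hqpos : ∀ t ∈ Set.Icc 0 T₁, 0 < q t)
    (hr0 : r 0 ≤ lam⁻¹)
    (hrderiv : ∀ t ∈ Set.Icc 0 T₁, HasDerivAt r (r' t) t)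
    (hr'ub : ∀ t ∈ Set.Icc 0 T₁, r' t ≤ c₁ * m₀)
    (hcomp : ∀ t ∈ Set.Icc 0 T₁, q t ≤ r t ∧ r t ≤ lam⁻¹ * q t) :
    ∀ t ∈ Set.Icc 0 T₁, ∀ s : ℝ, 0 < s → s ≠ 1 →
      (∫ τ in (0:ℝ)..t, (q τ) ^ (-s))
        ≤ (1 - s)⁻¹ * m₀⁻¹ * c₁⁻¹ * lam ^ (-s) * ((q t) ^ (1 - s) - lam ^ (s - 1)) := by
  intro t ht s hs hs1
  set K := m₀⁻¹ * c₁⁻¹ * lam ^ (-s)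
  set Φ : ℝ → ℝ := fun x => (1 - s)⁻¹ * x ^ (1 - s)
  have hsub : Icc 0 t ⊆ Icc 0 T₁ := Icc_subset_Icc_right ht.2
  have hrpos : ∀ τ ∈ Icc 0 T₁, 0 < r τ := fun τ hτ => (hqpos τ hτ).trans_le (hcomp τ hτ).1
  have hderiv : ∀ τ ∈ Icc 0 T₁,
      HasDerivAt (fun τ => K * Φ (r τ)) (K * (r τ ^ (-s) * r' τ)) τ := fun τ hτ =>
    ((hrderiv τ hτ).inv_one_sub_mul_rpow_one_sub (hrpos τ hτ) hs1).const_mul K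
  have hint : ∫ τ in (0:ℝ)..t, q τ ^ (-s) ≤ K * Φ (r t) - K * Φ (r 0) :=
    intervalIntegral.integral_le_sub_of_hasDeriv_right_of_le ht.1
      (fun τ hτ => (hderiv τ (hsub hτ)).continuousAt.continuousWithinAt)
      (fun τ hτ => (hderiv τ (hsub (Ioo_subset_Icc_self hτ))).hasDerivWithinAt)
      ((hqcont.mono hsub).rpow_const fun τ hτ => Or.inl (hqpos τ (hsub hτ)).ne').integrableOn_Icc
      fun τ hτ =>
        have hτ' := hsub (Ioo_subset_Icc_self hτ)
        rpow_neg_le_of_le_inv_mul_of_le_mul hlam1 (hrpos τ hτ') (hcomp τ hτ').2 hs.le hm₀ hc₁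
          (hr'ub τ hτ')
  have h0 : (0 : ℝ) ∈ Icc 0 T₁ := ⟨le_rfl, ht.1.trans ht.2⟩
  have hΦt : Φ (q t) ≤ Φ (r t) := monotoneOn_inv_one_sub_mul_rpow_one_sub hs1
    (hqpos t ht) (hrpos t ht) (hcomp t ht).1
  have hΦ0 : Φ (r 0) ≤ Φ lam⁻¹ := monotoneOn_inv_one_sub_mul_rpow_one_sub hs1
    (hrpos 0 h0) (inv_pos.2 hlam1) hr0
  have hK : K < 0 := mul_neg_of_neg_of_pos (mul_neg_of_neg_of_pos (inv_lt_zero.2 hm₀)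
    (inv_pos.2 hc₁)) (Real.rpow_pos_of_pos hlam1 _)
  have hΦlam : Φ lam⁻¹ = (1 - s)⁻¹ * lam ^ (s - 1) := by
    simp only [Φ, Real.inv_rpow hlam1.le, ← Real.rpow_neg hlam1.le, neg_sub]
  calc _ ≤ K * Φ (r t) - K * Φ (r 0) := hint
    _ ≤ K * (Φ (q t) - Φ lam⁻¹) := by nlinarith
    _ = _ := by rw [hΦlam]; ring

/-- Power-weight integral bound on `q`: under the comparison hypotheses on `r`
and `q`, for `s > 0`, `s ≠ 1`,
`∫₀ᵗ q(τ)^{-s} dτ ≤ (1-s)⁻¹ m₀⁻¹ c₁⁻¹ λ^{-s} [q(t)^{1-s} - λ^{s-1}]`. -/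
theorem stmt_8 (T₁ m₀ lam c₁ c₂ : ℝ) (hT : 0 ≤ T₁) (hm₀ : m₀ < 0)
    (hlam1 : 0 < lam) (hlam2 : lam < 1) (hc₁ : 0 < c₁) (hc₁₂ : c₁ < c₂)
    (q r r' : ℝ → ℝ)
    (hqcont : ContinuousOn q (Set.Icc 0 T₁))
    (hq0 : q 0 = 1) (hqpos : ∀ t ∈ Set.Icc 0 T₁, 0 < q t)
    (hqle : ∀ t ∈ Set.Icc 0 T₁, q t ≤ 1)
    (hr0 : r 0 ≤ lam⁻¹)
    (hrderiv : ∀ t ∈ Set.Icc 0 T₁, HasDerivAt r (r' t) t)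
    (hr'lb : ∀ t ∈ Set.Icc 0 T₁, c₂ * m₀ ≤ r' t)
    (hr'ub : ∀ t ∈ Set.Icc 0 T₁, r' t ≤ c₁ * m₀)
    (hcomp : ∀ t ∈ Set.Icc 0 T₁, q t ≤ r t ∧ r t ≤ lam⁻¹ * q t) :
    ∀ t ∈ Set.Icc 0 T₁, ∀ s : ℝ, 0 < s → s ≠ 1 →
      (∫ τ in (0:ℝ)..t, (q τ) ^ (-s))
        ≤ (1 - s)⁻¹ * m₀⁻¹ * c₁⁻¹ * lam ^ (-s) * ((q t) ^ (1 - s) - lam ^ (s - 1)) :=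
  stmt_8_general T₁ m₀ lam c₁ hm₀ hlam1 hc₁ q r r' hqcont hqpos hr0 hrderiv hr'ub hcomp
end

section
/- With the hypotheses of the previous q-bound lemma (m₀ < 0, 0 < λ < 1, 0 < c₁, c₂ m₀ ≤ r' ≤ c₁ m₀, q ≤ r ≤ λ^{-1} q, r(0) ≤ λ^{-1}), the logarithmic integral bound holds: ∫₀^t q(τ)^{-1} dτ ≤ m₀^{-1} c₁^{-1} λ^{-1} [log λ + log q(t)]. -/
open MeasureTheory

/-- Logarithmic integral bound on `q`: under the comparison hypotheses on `r`
and `q`, `∫₀ᵗ q(τ)⁻¹ dτ ≤ m₀⁻¹ c₁⁻¹ λ⁻¹ [log λ + log q(t)]`. -/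
theorem stmt_9 (T₁ m₀ lam c₁ c₂ : ℝ) (hT : 0 ≤ T₁) (hm₀ : m₀ < 0)
    (hlam1 : 0 < lam) (hlam2 : lam < 1) (hc₁ : 0 < c₁) (hc₁₂ : c₁ < c₂)
    (q r r' : ℝ → ℝ)
    (hqcont : ContinuousOn q (Set.Icc 0 T₁))
    (hq0 : q 0 = 1) (hqpos : ∀ t ∈ Set.Icc 0 T₁, 0 < q t)
    (hqle : ∀ t ∈ Set.Icc 0 T₁, q t ≤ 1)
    (hr0 : r 0 ≤ lam⁻¹)
    (hrderiv : ∀ t ∈ Set.Icc 0 T₁, HasDerivAt r (r' t) t)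
    (hr'lb : ∀ t ∈ Set.Icc 0 T₁, c₂ * m₀ ≤ r' t)
    (hr'ub : ∀ t ∈ Set.Icc 0 T₁, r' t ≤ c₁ * m₀)
    (hcomp : ∀ t ∈ Set.Icc 0 T₁, q t ≤ r t ∧ r t ≤ lam⁻¹ * q t) :
    ∀ t ∈ Set.Icc 0 T₁,
      (∫ τ in (0:ℝ)..t, (q τ)⁻¹)
        ≤ m₀⁻¹ * c₁⁻¹ * lam⁻¹ * (Real.log lam + Real.log (q t)) := by
  intro t ht
  obtain ⟨ht0, htT⟩ := ht
  have hIcc : Set.Icc (0:ℝ) t ⊆ Set.Icc 0 T₁ := Set.Icc_subset_Icc le_rfl htT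
  have hrpos : ∀ τ ∈ Set.Icc (0:ℝ) T₁, 0 < r τ :=
    fun τ hτ => lt_of_lt_of_le (hqpos τ hτ) (hcomp τ hτ).1
  have hcm : c₁ * m₀ < 0 := mul_neg_of_pos_of_neg hc₁ hm₀
  -- positive lower bound for q on the compact interval
  obtain ⟨τ₀, hτ₀, hmin'⟩ :=
    isCompact_Icc.exists_isMinOn ⟨0, Set.left_mem_Icc.2 hT⟩ hqcont
  have hmin := isMinOn_iff.mp hmin'
  have hεpos : 0 < q τ₀ := hqpos τ₀ hτ₀
  -- integrability of r'/r on [0,t]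
  have hint : IntervalIntegrable (fun τ => r' τ / r τ) volume 0 t := by
    rw [intervalIntegrable_iff_integrableOn_Icc_of_le ht0]
    have hrcont : ContinuousOn r (Set.Icc 0 t) :=
      fun x hx => ((hrderiv x (hIcc hx)).continuousAt).continuousWithinAt
    have haem : AEMeasurable (fun τ => r' τ / r τ)
        (volume.restrict (Set.Icc 0 t)) := by
      have h1 : AEMeasurable (fun τ => deriv r τ / r τ)
          (volume.restrict (Set.Icc 0 t)) :=
        (measurable_deriv r).aemeasurable.div (hrcont.aemeasurable measurableSet_Icc)
      refine h1.congr ?_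
      filter_upwards [MeasureTheory.ae_restrict_mem measurableSet_Icc] with x hx
      rw [(hrderiv x (hIcc hx)).deriv]
    refine MeasureTheory.Integrable.mono'
      (MeasureTheory.integrable_const ((|c₂ * m₀| + |c₁ * m₀|) / q τ₀))
      haem.aestronglyMeasurable ?_
    filter_upwards [MeasureTheory.ae_restrict_mem measurableSet_Icc] with x hx
    have hx' := hIcc hx
    have h1 : |r' x| ≤ |c₂ * m₀| + |c₁ * m₀| := by
      have := hr'lb x hx'; have := hr'ub x hx'
      have := neg_abs_le (c₂ * m₀); have := le_abs_self (c₁ * m₀)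
      have := abs_nonneg (c₂ * m₀); have := abs_nonneg (c₁ * m₀)
      rw [abs_le]; constructor <;> linarith
    have h2 : q τ₀ ≤ r x := le_trans (hmin x hx') (hcomp x hx').1
    rw [Real.norm_eq_abs, abs_div, abs_of_pos (hrpos x hx')]
    exact div_le_div₀ (by positivity) h1 hεpos h2
  -- FTC for log ∘ r
  have hftc : (∫ τ in (0:ℝ)..t, r' τ / r τ)
      = Real.log (r t) - Real.log (r 0) := by
    refine intervalIntegral.integral_eq_sub_of_hasDerivAt
      (f := fun x => Real.log (r x)) (fun x hx => ?_) hint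
    rw [Set.uIcc_of_le ht0] at hx
    exact (hrderiv x (hIcc hx)).log (ne_of_gt (hrpos x (hIcc hx)))
  -- pointwise comparison and integral monotonicity
  have hmono : (∫ τ in (0:ℝ)..t, (q τ)⁻¹)
      ≤ ∫ τ in (0:ℝ)..t, (lam⁻¹ * (c₁ * m₀)⁻¹) * (r' τ / r τ) := by
    refine intervalIntegral.integral_mono_on ht0 ?_ (hint.const_mul _) ?_
    · refine (ContinuousOn.intervalIntegrable ?_)
      rw [Set.uIcc_of_le ht0]
      exact (hqcont.mono hIcc).inv₀ (fun x hx => ne_of_gt (hqpos x (hIcc hx)))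
    · intro x hx
      have hx' := hIcc hx
      have hq := hqpos x hx'
      have hr := hrpos x hx'
      have e1 : (q x)⁻¹ ≤ lam⁻¹ * (r x)⁻¹ := by
        rw [← mul_inv]
        apply inv_anti₀ (by positivity)
        have h3 := (hcomp x hx').2
        calc lam * r x ≤ lam * (lam⁻¹ * q x) := by nlinarith
          _ = q x := by field_simp
      have e2 : 1 ≤ (c₁ * m₀)⁻¹ * r' x := by
        have := mul_le_mul_of_nonpos_left (hr'ub x hx')
          (le_of_lt (inv_lt_zero.mpr hcm))
        rwa [inv_mul_cancel₀ (ne_of_lt hcm)] at this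
      calc (q x)⁻¹ ≤ lam⁻¹ * (r x)⁻¹ := e1
        _ = lam⁻¹ * 1 * (r x)⁻¹ := by ring
        _ ≤ lam⁻¹ * ((c₁ * m₀)⁻¹ * r' x) * (r x)⁻¹ := by
            apply mul_le_mul_of_nonneg_right _ (by positivity)
            exact mul_le_mul_of_nonneg_left e2 (by positivity)
        _ = (lam⁻¹ * (c₁ * m₀)⁻¹) * (r' x / r x) := by ring
  rw [intervalIntegral.integral_const_mul, hftc] at hmono
  refine hmono.trans ?_
  have hr0pos : 0 < r 0 := hrpos 0 ⟨le_rfl, hT⟩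
  have hK : m₀⁻¹ * c₁⁻¹ * lam⁻¹ = lam⁻¹ * (c₁ * m₀)⁻¹ := by
    rw [mul_inv]; ring
  rw [hK]
  have hKneg : lam⁻¹ * (c₁ * m₀)⁻¹ ≤ 0 :=
    le_of_lt (mul_neg_of_pos_of_neg (by positivity) (inv_lt_zero.mpr hcm))
  apply mul_le_mul_of_nonpos_left _ hKneg
  have hA : Real.log (q t) ≤ Real.log (r t) :=
    Real.log_le_log (hqpos t ⟨ht0, htT⟩) (hcomp t ⟨ht0, htT⟩).1
  have hB : Real.log (r 0) ≤ -Real.log lam := by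
    rw [← Real.log_inv]
    exact Real.log_le_log hr0pos hr0
  linarith
end
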